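/- There exists an absolute constant c > 0 such that for every n ≥ 2 and every tie-free n×n real matrix A with unit Euclidean norm rows, writing α_i = |S_i(A)|/2^n, one has Σ_{i=1}^n (α_i − 1/(2n))² ≤ n^{-1/2} + c·(√(2·log(2n)) − β(A)). -/

import Mathlib

open Finset

noncomputable section
open scoped Classical

/-- The sign `±1` associated to a Boolean. -/
def sgn (b : Bool) : ℝ := if b then 1 else -1

/-- The hypercube `{-1,1}^n` as a finite set of vectors in `ℝ^n`. -/
def cube (n : ℕ) : Finset (Fin n → ℝ) :=
  (Finset.univ : Finset (Fin n → Bool)).image (fun ε i => sgn (ε i))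

/-- `β(A) = 2^{-n} ∑_{x ∈ {-1,1}^n} ‖Ax‖_∞` (the `Pi` norm on `Fin n → ℝ` is the sup norm). -/
def badBeta {n : ℕ} (A : Matrix (Fin n) (Fin n) ℝ) : ℝ :=
  (2 ^ n : ℝ)⁻¹ * ∑ x ∈ cube n, ‖A.mulVec x‖

/-- The cell `S_i(A) = {x ∈ {-1,1}^n : ‖Ax‖_∞ = ⟨a_i, x⟩}`. -/
def cellS {n : ℕ} (A : Matrix (Fin n) (Fin n) ℝ) (i : Fin n) : Finset (Fin n → ℝ) :=
  (cube n).filter (fun x => ‖A.mulVec x‖ = ∑ j, A i j * x j)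

/-- `A` is tie-free: no two distinct rows attain the same absolute inner product with a
hypercube vertex. -/
def TieFree {n : ℕ} (A : Matrix (Fin n) (Fin n) ℝ) : Prop :=
  ∀ x ∈ cube n, ∀ i j : Fin n, i ≠ j →
    (∑ k, A i k * x k) ^ 2 ≠ (∑ k, A j k * x k) ^ 2

/-- Level-1 Fourier weight of `f : {-1,1}^n → ℝ`. -/
def W1 {n : ℕ} (f : (Fin n → ℝ) → ℝ) : ℝ :=
  ∑ i : Fin n, ((2 ^ n : ℝ)⁻¹ * ∑ x ∈ cube n, f x * x i) ^ 2

/-!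
Tie-freeness makes the union of the cells `S_i` contain exactly one point of each antipodal
pair `±x` of the cube. Hence the densities `αᵢ = |S_i| / 2ⁿ` sum to `1/2`, and
`β(A) = 2 · 2⁻ⁿ ∑ᵢ ∑_{x ∈ S_i} ⟨a_i, x⟩`. Since `⟨a_i, x⟩` has moment generating function at most
`exp(λ²/2)`, a Chernoff argument bounds its sum over any set of density `α < 1` by
`2ⁿ α s(α)`, where `s(a) = √(-2 log a)`; so `β(A) ≤ 2 ∑ᵢ αᵢ s(αᵢ)`. Finally `a ↦ a² + 2 a s(a)` is
concave on `[0, 1/2]`, and Jensen's inequality at the mean `1/(2n)` gives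
`∑ᵢ (αᵢ - 1/(2n))² ≤ s(1/(2n)) - β(A) = √(2 log (2n)) - β(A)`, the claim with `c = 1`.
-/

open Matrix

lemma cube_eq_piFinset (n : ℕ) : cube n = Fintype.piFinset fun _ => {-1, 1} := by
  ext x
  simp only [cube, mem_image, mem_univ, true_and, Fintype.mem_piFinset, mem_insert,
    mem_singleton]
  constructor
  · rintro ⟨ε, rfl⟩ i
    by_cases h : ε i <;> simp [sgn, h]
  · intro hx
    refine ⟨fun i => decide (x i = 1), funext fun i => ?_⟩
    rcases hx i with h | h <;> norm_num [sgn, h]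

lemma card_cube (n : ℕ) : (cube n).card = 2 ^ n := by
  simp [cube_eq_piFinset, card_pair (show (-1 : ℝ) ≠ 1 by norm_num)]

lemma neg_mem_cube {n : ℕ} {x : Fin n → ℝ} (hx : x ∈ cube n) : -x ∈ cube n := by
  simp only [cube_eq_piFinset, Fintype.mem_piFinset, mem_insert, mem_singleton,
    Pi.neg_apply] at hx ⊢
  exact fun i => (hx i).symm.imp (by simp +contextual) (by simp +contextual)

lemma sum_cube_exp_le (n : ℕ) (θ : Fin n → ℝ) (l : ℝ) :
    ∑ x ∈ cube n, Real.exp (l * ∑ j, θ j * x j) ≤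
      2 ^ n * Real.exp (l ^ 2 * (∑ j, θ j ^ 2) / 2) := by
  have hprod : ∀ x : Fin n → ℝ, Real.exp (l * ∑ j, θ j * x j) =
      ∏ j, Real.exp (l * θ j * x j) := fun x => by
    rw [← Real.exp_sum, mul_sum]; simp only [mul_assoc]
  calc ∑ x ∈ cube n, Real.exp (l * ∑ j, θ j * x j)
      = ∏ j, (Real.exp (l * θ j * -1) + Real.exp (l * θ j * 1)) := by
        simp only [hprod, cube_eq_piFinset]
        rw [sum_prod_piFinset _ fun j t => Real.exp (l * θ j * t)]
        exact prod_congr rfl fun j _ => sum_pair (by norm_num)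
    _ ≤ ∏ j, 2 * Real.exp ((l * θ j) ^ 2 / 2) := by
        gcongr with j
        have := Real.cosh_le_exp_half_sq (l * θ j)
        rw [Real.cosh_eq] at this
        simp only [mul_one, mul_neg_one]
        linarith
    _ = 2 ^ n * Real.exp (l ^ 2 * (∑ j, θ j ^ 2) / 2) := by
        rw [prod_mul_distrib, prod_const, ← Real.exp_sum, card_univ,
          Fintype.card_fin, mul_sum, sum_div]
        simp only [mul_pow]

def sqrtNegTwoLog (a : ℝ) : ℝ := √(-2 * Real.log a)

lemma sq_sqrtNegTwoLog {a : ℝ} (h0 : 0 < a) (h1 : a ≤ 1) :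
    sqrtNegTwoLog a ^ 2 = -2 * Real.log a :=
  Real.sq_sqrt (by nlinarith [Real.log_nonpos h0.le h1])

lemma sqrtNegTwoLog_pos {a : ℝ} (h0 : 0 < a) (h1 : a < 1) : 0 < sqrtNegTwoLog a :=
  Real.sqrt_pos.2 (by nlinarith [Real.log_neg h0 h1])

lemma mul_sum_le_of_subset_cube {n : ℕ} (θ : Fin n → ℝ) {S : Finset (Fin n → ℝ)}
    (hS : S ⊆ cube n) (hS0 : S.Nonempty) (l : ℝ) :
    l * ∑ x ∈ S, ∑ j, θ j * x j ≤
      S.card * (l ^ 2 * (∑ j, θ j ^ 2) / 2 - Real.log (S.card / 2 ^ n)) := by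
  set α : ℝ := S.card / 2 ^ n
  set σ : ℝ := l ^ 2 * (∑ j, θ j ^ 2) / 2
  have hα : 0 < α := by simp only [α]; positivity
  have hpoint : ∀ x : Fin n → ℝ, l * ∑ j, θ j * x j - σ + Real.log α + 1 ≤
      α * Real.exp (-σ) * Real.exp (l * ∑ j, θ j * x j) := fun x => by
    have := Real.add_one_le_exp (l * ∑ j, θ j * x j - σ + Real.log α)
    rw [Real.exp_add, Real.exp_log hα, Real.exp_sub] at this
    convert this using 1
    rw [Real.exp_neg]
    ring
  have hsum : l * ∑ x ∈ S, ∑ j, θ j * x j - S.card * (σ - Real.log α) + S.card ≤ S.card :=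
    calc l * ∑ x ∈ S, ∑ j, θ j * x j - S.card * (σ - Real.log α) + S.card
        = ∑ x ∈ S, (l * ∑ j, θ j * x j - σ + Real.log α + 1) := by
          simp only [sum_add_distrib, sum_sub_distrib, sum_const,
            nsmul_eq_mul, mul_sum]
          ring
      _ ≤ ∑ x ∈ cube n, α * Real.exp (-σ) * Real.exp (l * ∑ j, θ j * x j) :=
          (sum_le_sum fun x _ => hpoint x).trans
            (sum_le_sum_of_subset_of_nonneg hS fun _ _ _ => by positivity)
      _ ≤ α * Real.exp (-σ) * (2 ^ n * Real.exp σ) := by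
          rw [← mul_sum]
          gcongr
          exact sum_cube_exp_le n θ l
      _ = S.card := by
          simp only [α]
          rw [mul_mul_mul_comm, ← Real.exp_add, neg_add_cancel, Real.exp_zero, mul_one,
            div_mul_cancel₀ _ (by positivity)]
  linarith

lemma sum_le_card_mul_sqrtNegTwoLog {n : ℕ} {θ : Fin n → ℝ} (hθ : ∑ j, θ j ^ 2 = 1)
    {S : Finset (Fin n → ℝ)} (hS : S ⊆ cube n) (hlt : S.card < 2 ^ n) :
    ∑ x ∈ S, ∑ j, θ j * x j ≤ S.card * sqrtNegTwoLog (S.card / 2 ^ n) := by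
  rcases S.eq_empty_or_nonempty with rfl | hS0
  · simp
  have hα0 : (0 : ℝ) < S.card / 2 ^ n := by have := hS0.card_pos; positivity
  have hα1 : (S.card : ℝ) / 2 ^ n < 1 := by
    rw [div_lt_one (by positivity)]; exact_mod_cast hlt
  set l := sqrtNegTwoLog (S.card / 2 ^ n)
  have hl : 0 < l := sqrtNegTwoLog_pos hα0 hα1
  have hl2 : l ^ 2 = -2 * Real.log (S.card / 2 ^ n) := sq_sqrtNegTwoLog hα0 hα1.le
  have := mul_sum_le_of_subset_cube θ hS hS0 l
  rw [hθ] at this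
  refine le_of_mul_le_mul_left ?_ hl
  nlinarith

lemma exists_norm_eq_abs_apply {ι : Type*} [Fintype ι] [Nonempty ι] (v : ι → ℝ) :
    ∃ i, ‖v‖ = |v i| := by
  obtain ⟨i, -, hi⟩ := Finset.exists_mem_eq_sup univ univ_nonempty fun i => ‖v i‖₊
  exact ⟨i, by rw [← Real.norm_eq_abs, ← coe_nnnorm, Pi.nnnorm_def, hi, coe_nnnorm]⟩

section Cells

variable {n : ℕ} {A : Matrix (Fin n) (Fin n) ℝ}

variable (A) in
def cellUnion : Finset (Fin n → ℝ) := univ.biUnion (cellS A)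

lemma mem_cellUnion {x : Fin n → ℝ} :
    x ∈ cellUnion A ↔ x ∈ cube n ∧ ∃ i, ‖A *ᵥ x‖ = (A *ᵥ x) i := by
  simp only [cellUnion, cellS, mem_biUnion, mem_univ, mem_filter, true_and]
  exact ⟨fun ⟨i, hx, hi⟩ => ⟨hx, i, hi⟩, fun ⟨hx, i, hi⟩ => ⟨i, hx, hi⟩⟩

lemma mem_cellUnion_or_neg_mem (hn : n ≠ 0) {x : Fin n → ℝ} (hx : x ∈ cube n) :
    x ∈ cellUnion A ∨ -x ∈ cellUnion A := by
  have : NeZero n := ⟨hn⟩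
  obtain ⟨i, hi⟩ := exists_norm_eq_abs_apply (A *ᵥ x)
  simp only [mem_cellUnion, mulVec_neg, norm_neg, Pi.neg_apply, hx, neg_mem_cube hx,
    true_and]
  rcases le_or_gt 0 ((A *ᵥ x) i) with h | h
  · exact .inl ⟨i, by rw [hi, abs_of_nonneg h]⟩
  · exact .inr ⟨i, by rw [hi, abs_of_neg h]⟩

lemma TieFree.neg_notMem_cellUnion (hT : TieFree A) (hn : 2 ≤ n) {x : Fin n → ℝ}
    (hxU : x ∈ cellUnion A) : -x ∉ cellUnion A := by
  intro hnegU
  obtain ⟨hx, i, hi⟩ := mem_cellUnion.1 hxU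
  obtain ⟨-, j, hj⟩ := mem_cellUnion.1 hnegU
  simp only [mulVec_neg, norm_neg, Pi.neg_apply] at hj
  obtain ⟨k, hki, hk⟩ : ∃ k, k ≠ i ∧ (A *ᵥ x) k ^ 2 = (A *ᵥ x) i ^ 2 := by
    by_cases hji : j = i
    -- then `(A *ᵥ x) i = ‖A *ᵥ x‖ = -(A *ᵥ x) i`, so `A *ᵥ x = 0` and every other row ties
    · rw [hji] at hj
      have : Nontrivial (Fin n) := Fin.nontrivial_iff_two_le.2 hn
      obtain ⟨k, hk⟩ := exists_ne i
      have hi0 : (A *ᵥ x) i = 0 := by linarith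
      have hk0 : |(A *ᵥ x) k| ≤ 0 := by
        simpa only [Real.norm_eq_abs, hi, hi0] using norm_le_pi_norm (A *ᵥ x) k
      exact ⟨k, hk, by rw [abs_nonpos_iff.1 hk0, hi0]⟩
    · exact ⟨j, hji, by rw [← hi, hj, neg_sq]⟩
  exact hT x hx k i hki hk

lemma TieFree.sum_cube_eq_two_mul_sum_cellUnion (hT : TieFree A) (hn : 2 ≤ n)
    (F : (Fin n → ℝ) → ℝ) (hF : ∀ x, F (-x) = F x) :
    ∑ x ∈ cube n, F x = 2 * ∑ x ∈ cellUnion A, F x := by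
  have hsub : cellUnion A ⊆ cube n := fun x hx => (mem_cellUnion.1 hx).1
  have hcompl : ∑ x ∈ cube n \ cellUnion A, F x = ∑ x ∈ cellUnion A, F x := by
    refine sum_nbij' (fun x => -x) (fun x => -x) (fun x hx => ?_) (fun x hx => ?_)
      (fun x _ => neg_neg x) (fun x _ => neg_neg x) (fun x _ => (hF x).symm)
    · rw [mem_sdiff] at hx
      exact (mem_cellUnion_or_neg_mem (by omega) hx.1).resolve_left hx.2
    · exact mem_sdiff.2 ⟨neg_mem_cube (hsub hx), hT.neg_notMem_cellUnion hn hx⟩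
  rw [← sum_sdiff hsub, hcompl, two_mul]

lemma TieFree.pairwiseDisjoint_cellS (hT : TieFree A) :
    ((univ : Finset (Fin n)) : Set (Fin n)).PairwiseDisjoint (cellS A) := by
  intro i _ j _ hij
  refine disjoint_left.2 fun x hxi hxj => ?_
  rw [cellS, mem_filter] at hxi hxj
  exact hT x hxi.1 i j hij (by rw [← hxi.2, ← hxj.2])

lemma TieFree.two_mul_sum_card_cellS (hT : TieFree A) (hn : 2 ≤ n) :
    2 * ∑ i, ((cellS A i).card : ℝ) = 2 ^ n := by
  have := hT.sum_cube_eq_two_mul_sum_cellUnion hn (fun _ => (1 : ℝ)) fun _ => rfl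
  simp only [sum_const, card_cube, nsmul_eq_mul, mul_one, cellUnion,
    card_biUnion hT.pairwiseDisjoint_cellS] at this
  exact_mod_cast this.symm

lemma TieFree.badBeta_eq (hT : TieFree A) (hn : 2 ≤ n) :
    badBeta A = 2 * ((2 ^ n : ℝ)⁻¹ * ∑ i, ∑ x ∈ cellS A i, ∑ j, A i j * x j) := by
  rw [badBeta, hT.sum_cube_eq_two_mul_sum_cellUnion hn _ fun x => by
    rw [mulVec_neg, norm_neg], cellUnion, sum_biUnion hT.pairwiseDisjoint_cellS]
  have hcell : ∀ i, ∑ x ∈ cellS A i, ‖A *ᵥ x‖ = ∑ x ∈ cellS A i, ∑ j, A i j * x j :=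
    fun i => sum_congr rfl fun x hx => (mem_filter.1 hx).2
  simp only [hcell]
  ring

lemma TieFree.badBeta_le (hT : TieFree A) (hn : 2 ≤ n) (hA : ∀ i, ∑ j, A i j ^ 2 = 1) :
    badBeta A ≤
      2 * ∑ i, (cellS A i).card / 2 ^ n * sqrtNegTwoLog ((cellS A i).card / 2 ^ n) := by
  have hcard : 2 * ∑ i, ((cellS A i).card : ℝ) = 2 ^ n := hT.two_mul_sum_card_cellS hn
  rw [hT.badBeta_eq hn, mul_sum]
  gcongr 2 * ?_
  refine sum_le_sum fun i _ => ?_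
  have hlt : ((cellS A i).card : ℝ) < 2 ^ n := by
    have := single_le_sum (f := fun j => ((cellS A j).card : ℝ)) (fun j _ => by positivity)
      (mem_univ i)
    linarith [pow_pos (two_pos : (0 : ℝ) < 2) n]
  rw [div_mul_eq_mul_div, div_eq_inv_mul]
  gcongr
  exact sum_le_card_mul_sqrtNegTwoLog (hA i) (filter_subset _ _) (by exact_mod_cast hlt)

end Cells

lemma mul_sqrtNegTwoLog_le_one {a : ℝ} (h0 : 0 ≤ a) (h1 : a ≤ 1 / 2) :
    a * sqrtNegTwoLog a ≤ 1 := by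
  rcases h0.eq_or_lt with rfl | h0
  · simp
  have hlog : -Real.log a ≤ a⁻¹ - 1 := by
    simpa only [Real.log_inv] using Real.log_le_sub_one_of_pos (inv_pos.2 h0)
  have hsq : (a * sqrtNegTwoLog a) ^ 2 ≤ 1 := by
    rw [mul_pow, sq_sqrtNegTwoLog h0 (by linarith)]
    have : a * (-Real.log a) ≤ 1 - a := by
      calc a * (-Real.log a) ≤ a * (a⁻¹ - 1) := by gcongr
        _ = 1 - a := by field_simp
    nlinarith
  nlinarith [sq_nonneg (a * sqrtNegTwoLog a - 1)]

lemma hasDerivAt_sqrtNegTwoLog {a : ℝ} (h0 : 0 < a) (h1 : a < 1) :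
    HasDerivAt sqrtNegTwoLog (-1 / (a * sqrtNegTwoLog a)) a := by
  have hs : 0 < √(-2 * Real.log a) := sqrtNegTwoLog_pos h0 h1
  have hlog : -2 * Real.log a ≠ 0 := by nlinarith [Real.log_neg h0 h1]
  refine (((Real.hasDerivAt_log h0.ne').const_mul (-2)).sqrt hlog).congr_deriv ?_
  simp only [sqrtNegTwoLog]
  field_simp

lemma continuousOn_sq_add_two_mul_mul_sqrtNegTwoLog :
    ContinuousOn (fun a => a ^ 2 + 2 * (a * sqrtNegTwoLog a)) (Set.Ici 0) := by
  have hcont : Continuous fun a : ℝ => a ^ 2 + 2 * √(-2 * a * (a * Real.log a)) := by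
    have := Real.continuous_mul_log
    fun_prop
  -- for `a ≥ 0`, `a * √(-2 log a) = √(-2 a (a log a))`, and `a log a` is continuous at `0`
  refine hcont.continuousOn.congr fun a (ha : 0 ≤ a) => ?_
  rw [sqrtNegTwoLog, ← Real.sqrt_sq ha, ← Real.sqrt_mul (sq_nonneg _), Real.sqrt_sq ha]
  ring_nf

lemma concaveOn_sq_add_two_mul_mul_sqrtNegTwoLog :
    ConcaveOn ℝ (Set.Icc 0 (1 / 2)) (fun a => a ^ 2 + 2 * (a * sqrtNegTwoLog a)) := by
  refine concaveOn_of_hasDerivWithinAt2_nonpos (convex_Icc 0 (1 / 2))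
    (continuousOn_sq_add_two_mul_mul_sqrtNegTwoLog.mono Set.Icc_subset_Ici_self)
    (f' := fun a => 2 * a + 2 * sqrtNegTwoLog a - 2 * (sqrtNegTwoLog a)⁻¹)
    (f'' := fun a => 2 - 2 * ((1 + (sqrtNegTwoLog a ^ 2)⁻¹) / (a * sqrtNegTwoLog a)))
    ?_ ?_ ?_ <;> rw [interior_Icc] <;> intro a ⟨h0, h1⟩
  all_goals
    have h1' : a < 1 := by linarith
    have hs := sqrtNegTwoLog_pos h0 h1'
    have hs' := hasDerivAt_sqrtNegTwoLog h0 h1'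
  · refine HasDerivAt.hasDerivWithinAt <|
      ((hasDerivAt_pow 2 a).add (((hasDerivAt_id' a).mul hs').const_mul 2)).congr_deriv ?_
    field_simp
    ring
  · refine HasDerivAt.hasDerivWithinAt <| ((((hasDerivAt_id a).const_mul 2).add
      (hs'.const_mul 2)).sub ((hs'.inv hs.ne').const_mul 2)).congr_deriv ?_
    field_simp
    ring
  · have hle : a * sqrtNegTwoLog a ≤ 1 := mul_sqrtNegTwoLog_le_one h0.le h1.le
    have : 1 ≤ (1 + (sqrtNegTwoLog a ^ 2)⁻¹) / (a * sqrtNegTwoLog a) := by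
      rw [one_le_div (by positivity)]
      linarith [inv_nonneg.2 (sq_nonneg (sqrtNegTwoLog a))]
    linarith

lemma sqrtNegTwoLog_one_div (x : ℝ) : sqrtNegTwoLog (1 / x) = √(2 * Real.log x) := by
  rw [sqrtNegTwoLog, one_div, Real.log_inv, neg_mul_neg]

lemma sum_sq_sub_le_sqrtNegTwoLog_sub {n : ℕ} {α : Fin n → ℝ} (h0 : ∀ i, 0 ≤ α i)
    (hsum : ∑ i, α i = 1 / 2) :
    ∑ i, (α i - 1 / (2 * n)) ^ 2 ≤
      sqrtNegTwoLog (1 / (2 * n)) - 2 * ∑ i, α i * sqrtNegTwoLog (α i) := by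
  have hn : n ≠ 0 := by
    rintro rfl
    norm_num at hsum
  set m : ℝ := 1 / (2 * n)
  have hn' : (0 : ℝ) < n := by positivity
  have hnm : n * m = 1 / 2 := by simp only [m]; field_simp
  have hle : ∀ i, α i ≤ 1 / 2 := fun i =>
    hsum ▸ single_le_sum (fun j _ => h0 j) (mem_univ i)
  have hjensen := concaveOn_sq_add_two_mul_mul_sqrtNegTwoLog.le_map_sum (t := univ)
    (w := fun _ => (n : ℝ)⁻¹) (p := α) (fun _ _ => by positivity)
    (by simp [hn]) (fun i _ => ⟨h0 i, hle i⟩)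
  have hmean : ∑ i, (n : ℝ)⁻¹ • α i = m := by
    simp only [smul_eq_mul, ← mul_sum, hsum, m]
    ring
  rw [hmean] at hjensen
  simp only [smul_eq_mul, ← mul_sum, sum_add_distrib] at hjensen
  rw [inv_mul_le_iff₀ hn'] at hjensen
  have hexpand : ∑ i, (α i - m) ^ 2 = ∑ i, α i ^ 2 - 2 * m * ∑ i, α i + n * m ^ 2 := by
    simp only [sub_sq, sum_add_distrib, sum_sub_distrib, sum_const, card_univ,
      Fintype.card_fin, nsmul_eq_mul]
    rw [← sum_mul, ← mul_sum]
    ring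
  rw [hexpand, hsum]
  linear_combination hjensen + (2 * m + 2 * sqrtNegTwoLog m) * hnm

theorem stmt6 : ∃ c : ℝ, 0 < c ∧ ∀ n : ℕ, 2 ≤ n → ∀ A : Matrix (Fin n) (Fin n) ℝ,
    (∀ i, ∑ j, (A i j) ^ 2 = 1) → TieFree A →
    ∑ i : Fin n, (((cellS A i).card : ℝ) / 2 ^ n - 1 / (2 * n)) ^ 2 ≤
      (n : ℝ) ^ (-(1 / 2) : ℝ) + c * (Real.sqrt (2 * Real.log (2 * n)) - badBeta A) := by
  refine ⟨1, one_pos, fun n hn A hA hT => ?_⟩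
  have hsum : ∑ i, ((cellS A i).card : ℝ) / 2 ^ n = 1 / 2 := by
    rw [← sum_div, div_eq_iff (by positivity), ← hT.two_mul_sum_card_cellS hn]
    ring
  have hdev := sum_sq_sub_le_sqrtNegTwoLog_sub (fun i => by positivity) hsum
  rw [sqrtNegTwoLog_one_div] at hdev
  have hβ := hT.badBeta_le hn hA
  have hrpow : 0 ≤ (n : ℝ) ^ (-(1 / 2) : ℝ) := Real.rpow_nonneg n.cast_nonneg _
  linarith
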